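/- arXiv:math/0506092 — 2 statements merged into one kernel-verified Lean document; each statement's English description precedes it below -/
import Mathlib

section
/- Let ν be a Borel measure on (0,1] with ∫ r² ν(dr) < ∞ satisfying Assumption (A) with index γ ∈ (1,2) and slowly varying function L. For integers b ≥ 2 set α_b = ∫_{(0,1]} (1 − (1−x)^b − b x (1−x)^{b−1}) ν(dx), which equals the total coalescence rate ∑_{k=2}^{b} C(b,k) ∫ x^k (1−x)^{b−k} ν(dx) of the associated Λ-coalescent started from b blocks. Then lim_{b→∞} α_b / (b^{γ} L(1/b)) = Γ(2−γ). -/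
/-!
By the layer cake formula, `α_b = ∫₀¹ b (b-1) t (1-t)^(b-2) ν([t,1]) dt`, the weight being the
derivative of `P(Bin(b, t) ≥ 2)`. Substituting `t = s / b` and dividing by
`ν([1/b,1]) = b^γ L(1/b)` gives `∫₀^b (1 - 1/b) s (1 - s/b)^(b-2) ν([s/b,1]) / ν([1/b,1]) ds`,
whose integrand tends to `s^(1-γ) e^(-s)` by regular variation. For `p ∈ (γ, 2)`, the Potter
bound `ν([sε,1]) ≤ 2^p s^(-p) ν([ε,1])` (`s ≤ 1`, `ε` small) and `(1 - s/b)^(b-2) ≤ e^(-s/2)`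
give an integrable majorant, so dominated convergence yields `∫₀^∞ s^(1-γ) e^(-s) ds = Γ(2-γ)`.
-/

open MeasureTheory Filter Set Topology Real

/-- `P(Bin(b, x) ≥ 2)`. -/
def probAtLeastTwo (b : ℕ) (x : ℝ) : ℝ := 1 - (1 - x) ^ b - b * x * (1 - x) ^ (b - 1)

lemma probAtLeastTwo_eq_sum (b : ℕ) (x : ℝ) :
    probAtLeastTwo b x
      = ∑ k ∈ Finset.Icc 2 b, (b.choose k : ℝ) * (x ^ k * (1 - x) ^ (b - k)) := by
  rcases lt_or_ge b 2 with hb | hb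
  · interval_cases b <;> simp [probAtLeastTwo]
  have h := add_pow x (1 - x) b
  rw [add_sub_cancel, one_pow, Finset.range_eq_Ico, Finset.sum_eq_sum_Ico_succ_bot (by omega),
    Finset.sum_eq_sum_Ico_succ_bot (by omega), Finset.Ico_add_one_right_eq_Icc] at h
  simp only [zero_add, pow_zero, pow_one, Nat.choose_zero_right, Nat.choose_one_right,
    Nat.cast_one, Nat.sub_zero, one_mul, mul_one] at h
  rw [probAtLeastTwo, Finset.sum_congr rfl fun k _ => mul_comm _ _]
  linear_combination h

lemma integrable_pow_mul_one_sub_pow {ν : Measure ℝ} (hν : ν (Ioc 0 1)ᶜ = 0)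
    (hmom : ∫⁻ r, ENNReal.ofReal (r ^ 2) ∂ν < ⊤) {k : ℕ} (hk : 2 ≤ k) (m : ℕ) :
    Integrable (fun x : ℝ => x ^ k * (1 - x) ^ m) ν := by
  have hsq : Integrable (fun x : ℝ => x ^ 2) ν :=
    ⟨by fun_prop, (hasFiniteIntegral_iff_ofReal (ae_of_all _ fun x => sq_nonneg x)).2 hmom⟩
  refine hsq.mono (by fun_prop) ?_
  filter_upwards [mem_ae_iff.2 hν] with x ⟨hx0, hx1⟩
  have h1x : 0 ≤ 1 - x := by linarith
  rw [norm_of_nonneg (by positivity), norm_of_nonneg (sq_nonneg x)]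
  calc x ^ k * (1 - x) ^ m ≤ x ^ 2 * 1 :=
        mul_le_mul (pow_le_pow_of_le_one hx0.le hx1 hk) (pow_le_one₀ h1x (by linarith))
          (by positivity) (by positivity)
    _ = x ^ 2 := mul_one _

lemma integral_probAtLeastTwo_eq_sum {ν : Measure ℝ} (hν : ν (Ioc 0 1)ᶜ = 0)
    (hmom : ∫⁻ r, ENNReal.ofReal (r ^ 2) ∂ν < ⊤) (b : ℕ) :
    ∫ x, probAtLeastTwo b x ∂ν
      = ∑ k ∈ Finset.Icc 2 b, (b.choose k : ℝ) * ∫ x, x ^ k * (1 - x) ^ (b - k) ∂ν := by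
  simp_rw [probAtLeastTwo_eq_sum, ← integral_const_mul]
  exact integral_finsetSum _ fun k hk =>
    (integrable_pow_mul_one_sub_pow hν hmom (Finset.mem_Icc.1 hk).1 _).const_mul _

lemma probAtLeastTwo_nonneg (b : ℕ) {x : ℝ} (hx0 : 0 ≤ x) (hx1 : x ≤ 1) :
    0 ≤ probAtLeastTwo b x := by
  have : 0 ≤ 1 - x := by linarith
  rw [probAtLeastTwo_eq_sum]
  positivity

def probAtLeastTwoDeriv (b : ℕ) (t : ℝ) : ℝ := b * (b - 1) * t * (1 - t) ^ (b - 2)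

lemma continuous_probAtLeastTwoDeriv (b : ℕ) : Continuous (probAtLeastTwoDeriv b) := by
  unfold probAtLeastTwoDeriv
  fun_prop

lemma probAtLeastTwoDeriv_nonneg (b : ℕ) {t : ℝ} (ht0 : 0 ≤ t) (ht1 : t ≤ 1) :
    0 ≤ probAtLeastTwoDeriv b t := by
  have hb : 0 ≤ (b : ℝ) * (b - 1) := by
    rcases b with _ | b
    · simp
    · push_cast
      rw [add_sub_cancel_right]
      positivity
  have : 0 ≤ 1 - t := by linarith
  unfold probAtLeastTwoDeriv
  positivity

lemma hasDerivAt_probAtLeastTwo (b : ℕ) (t : ℝ) :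
    HasDerivAt (probAtLeastTwo b) (probAtLeastTwoDeriv b t) t := by
  have h1 : HasDerivAt (fun t : ℝ => 1 - t) (-1) t := by simpa using (hasDerivAt_id t).const_sub 1
  refine (((h1.pow b).const_sub 1).sub
    (((hasDerivAt_id' t).const_mul (b : ℝ)).mul (h1.pow (b - 1)))).congr_deriv ?_
  rcases b with _ | _ | n
  · simp [probAtLeastTwoDeriv]
  · simp [probAtLeastTwoDeriv]
  rw [probAtLeastTwoDeriv, show n + 2 - 1 = n + 1 from rfl, show n + 1 - 1 = n from rfl,
    show n + 2 - 2 = n from rfl, Pi.pow_apply]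
  push_cast
  ring

lemma integral_probAtLeastTwoDeriv (b : ℕ) (x : ℝ) :
    ∫ t in 0..x, probAtLeastTwoDeriv b t = probAtLeastTwo b x := by
  rw [intervalIntegral.integral_eq_sub_of_hasDerivAt (fun t _ => hasDerivAt_probAtLeastTwo b t)
    ((continuous_probAtLeastTwoDeriv b).intervalIntegrable _ _)]
  simp [probAtLeastTwo]

lemma lintegral_ofReal_intervalIntegral_eq_setLIntegral {ν : Measure ℝ} (hν : ν (Ioc 0 1)ᶜ = 0)
    {φ : ℝ → ℝ} (hφc : Continuous φ) (hφ : ∀ t ∈ Ioc 0 1, 0 ≤ φ t) :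
    ∫⁻ x, ENNReal.ofReal (∫ t in 0..x, φ t) ∂ν
      = ∫⁻ t in Ioc 0 1, ν (Icc t 1) * ENNReal.ofReal (φ t) := by
  have hae : ∀ᵐ x ∂ν, x ∈ Ioc (0 : ℝ) 1 := mem_ae_iff.2 hν
  -- the layer cake formula needs a weight that is nonnegative on all of `(0, ∞)`
  set ψ : ℝ → ℝ := fun t => φ (min t 1)
  have hψφ : ∀ t ≤ 1, ψ t = φ t := fun t ht => by simp [ψ, min_eq_left ht]
  have hlayer := lintegral_comp_eq_lintegral_meas_le_mul ν (f := id) (g := ψ)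
    (by filter_upwards [hae] with x hx using hx.1.le) aemeasurable_id
    (fun t _ => (hφc.comp (continuous_id.min continuous_const)).intervalIntegrable 0 t)
    (ae_restrict_of_forall_mem measurableSet_Ioi fun t (ht : 0 < t) =>
      hφ _ ⟨lt_min ht one_pos, min_le_right t 1⟩)
  have hmeas : ∀ t > 0, ν {a | t ≤ id a} = ν (Icc t 1) := fun t ht => by
    rw [← measure_inter_conull hν, ← measure_inter_conull (s := Icc t 1) hν]
    congr 1
    ext a
    simp only [mem_inter_iff, mem_ofPred_eq, id, mem_Icc, mem_Ioc]
    constructor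
    · rintro ⟨h, _, h1⟩; exact ⟨⟨h, h1⟩, ht.trans_le h, h1⟩
    · rintro ⟨⟨h, h1⟩, h0, -⟩; exact ⟨h, h0, h1⟩
  calc ∫⁻ x, ENNReal.ofReal (∫ t in 0..x, φ t) ∂ν
      = ∫⁻ x, ENNReal.ofReal (∫ t in 0..id x, ψ t) ∂ν := by
        refine lintegral_congr_ae ?_
        filter_upwards [hae] with x hx
        rw [intervalIntegral.integral_congr fun t ht => ?_]
        · rfl
        rw [uIcc_of_le hx.1.le] at ht
        exact (hψφ t (ht.2.trans hx.2)).symm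
    _ = ∫⁻ t in Ioc 0 1 ∪ Ioi 1, ν {a | t ≤ id a} * ENNReal.ofReal (ψ t) := by
        rw [hlayer, Ioc_union_Ioi_eq_Ioi zero_le_one]
    _ = ∫⁻ t in Ioc 0 1, ν (Icc t 1) * ENNReal.ofReal (φ t) := by
        rw [lintegral_union measurableSet_Ioi Ioc_disjoint_Ioi_same]
        rw [setLIntegral_congr_fun measurableSet_Ioi fun t (ht : 1 < t) => by
          rw [hmeas t (one_pos.trans ht), Icc_eq_empty_of_lt ht, measure_empty, zero_mul],
          lintegral_zero, add_zero]
        exact setLIntegral_congr_fun measurableSet_Ioc fun t ht => by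
          rw [hmeas t ht.1, hψφ t ht.2]

lemma measurable_toReal_measure_Icc (ν : Measure ℝ) (c : ℝ) :
    Measurable fun t => (ν (Icc t c)).toReal :=
  ENNReal.measurable_toReal.comp
    (Antitone.measurable fun _ _ hst => measure_mono (Icc_subset_Icc_left hst))

lemma integral_probAtLeastTwo_eq_integral_tail {ν : Measure ℝ} (hν : ν (Ioc 0 1)ᶜ = 0)
    (hfin : ∀ t ∈ Ioc 0 1, ν (Icc t 1) ≠ ⊤) (b : ℕ) :
    ∫ x, probAtLeastTwo b x ∂ν
      = ∫ t in Ioc 0 1, probAtLeastTwoDeriv b t * (ν (Icc t 1)).toReal := by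
  have hφ : ∀ t ∈ Ioc (0 : ℝ) 1, 0 ≤ probAtLeastTwoDeriv b t := fun t ht =>
    probAtLeastTwoDeriv_nonneg b ht.1.le ht.2
  have hlhs_nonneg : 0 ≤ᵐ[ν] probAtLeastTwo b := by
    filter_upwards [mem_ae_iff.2 hν] with x hx using probAtLeastTwo_nonneg b hx.1.le hx.2
  have hrhs_nonneg : 0 ≤ᵐ[volume.restrict (Ioc 0 1)]
      fun t => probAtLeastTwoDeriv b t * (ν (Icc t 1)).toReal :=
    ae_restrict_of_forall_mem measurableSet_Ioc fun t ht =>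
      mul_nonneg (hφ t ht) ENNReal.toReal_nonneg
  have hlhs_meas : AEStronglyMeasurable (probAtLeastTwo b) ν :=
    (by unfold probAtLeastTwo; fun_prop : Continuous (probAtLeastTwo b)).aestronglyMeasurable
  have hrhs_meas : AEStronglyMeasurable
      (fun t => probAtLeastTwoDeriv b t * (ν (Icc t 1)).toReal) (volume.restrict (Ioc 0 1)) :=
    ((continuous_probAtLeastTwoDeriv b).measurable.mul
      (measurable_toReal_measure_Icc ν 1)).aestronglyMeasurable
  rw [integral_eq_lintegral_of_nonneg_ae hlhs_nonneg hlhs_meas,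
    integral_eq_lintegral_of_nonneg_ae hrhs_nonneg hrhs_meas]
  congr 1
  simp_rw [← integral_probAtLeastTwoDeriv b]
  rw [lintegral_ofReal_intervalIntegral_eq_setLIntegral hν (continuous_probAtLeastTwoDeriv b) hφ]
  refine setLIntegral_congr_fun measurableSet_Ioc fun t ht => ?_
  rw [ENNReal.ofReal_mul (hφ t ht), ENNReal.ofReal_toReal (hfin t ht), mul_comm]

noncomputable def rescaledIntegrand (F : ℝ → ℝ) (b : ℕ) : ℝ → ℝ :=
  (Ioc 0 (b : ℝ)).indicator fun s =>
    (1 - 1 / b) * s * (1 - s / b) ^ (b - 2) * (F (s / b) / F (1 / b))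

lemma integral_rescaledIntegrand (F : ℝ → ℝ) {b : ℕ} (hb : 0 < b) :
    ∫ s in Ioi 0, rescaledIntegrand F b s
      = (∫ t in Ioc 0 1, probAtLeastTwoDeriv b t * F t) / F (1 / b) := by
  set ψ : ℝ → ℝ := fun t => probAtLeastTwoDeriv b t * F t
  have hb0 : (0 : ℝ) < b := by exact_mod_cast hb
  have hmem : ∀ s : ℝ, s / b ∈ Ioc (0 : ℝ) 1 ↔ s ∈ Ioc (0 : ℝ) b := fun s => by
    simp only [mem_Ioc, div_pos_iff_of_pos_right hb0, div_le_one hb0]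
  have hpoint : rescaledIntegrand F b
      = fun s => (Ioc (0 : ℝ) 1).indicator ψ (s / b) / (b * F (1 / b)) := by
    ext s
    by_cases hs : s ∈ Ioc (0 : ℝ) b
    · rw [rescaledIntegrand, indicator_of_mem hs, indicator_of_mem ((hmem s).2 hs)]
      simp only [ψ, probAtLeastTwoDeriv, div_eq_mul_inv, mul_inv]
      field_simp
    · rw [rescaledIntegrand, indicator_of_notMem hs, indicator_of_notMem (mt (hmem s).1 hs),
        zero_div]
  have hsupp : ∀ s ∉ Ioi (0 : ℝ), (Ioc (0 : ℝ) 1).indicator ψ (s / b) = 0 := fun s hs =>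
    indicator_of_notMem (fun h => hs ((hmem s).1 h).1) _
  rw [hpoint, integral_div, setIntegral_eq_integral_of_forall_compl_eq_zero hsupp,
    Measure.integral_comp_div, integral_indicator measurableSet_Ioc, abs_of_pos hb0, smul_eq_mul,
    mul_div_mul_left _ _ hb0.ne']

lemma tendsto_one_sub_div_pow_sub (s : ℝ) (k : ℕ) :
    Tendsto (fun b : ℕ => (1 - s / b) ^ (b - k)) atTop (𝓝 (exp (-s))) := by
  have hbase : Tendsto (fun b : ℕ => 1 - s / b) atTop (𝓝 1) := by
    simpa using tendsto_const_nhds.sub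
      ((tendsto_const_nhds (x := s)).div_atTop (tendsto_natCast_atTop_atTop (R := ℝ)))
  have h := (tendsto_one_add_div_pow_exp (-s)).div (hbase.pow k) (by simp)
  rw [one_pow, div_one] at h
  refine h.congr' ?_
  filter_upwards [eventually_ge_atTop k, eventually_gt_atTop ⌈s⌉₊] with b hkb hsb
  have hb0 : (0 : ℝ) < b := by exact_mod_cast (Nat.zero_le _).trans_lt hsb
  have hne : 1 - s / b ≠ 0 :=
    (sub_pos.2 ((div_lt_one hb0).2 ((Nat.le_ceil s).trans_lt (by exact_mod_cast hsb)))).ne'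
  simp only [Pi.div_apply]
  rw [neg_div, ← sub_eq_add_neg, pow_sub₀ _ hne hkb, div_eq_mul_inv]

lemma one_sub_div_pow_sub_two_le_exp {b : ℕ} (hb : 4 ≤ b) {s : ℝ} (hs0 : 0 ≤ s) (hs : s ≤ b) :
    (1 - s / b) ^ (b - 2) ≤ exp (-(1 / 2) * s) := by
  have hb4 : (4 : ℝ) ≤ b := by exact_mod_cast hb
  have hb0 : (0 : ℝ) < b := by linarith
  calc (1 - s / b) ^ (b - 2) ≤ exp (-(s / b)) ^ (b - 2) := by
        gcongr
        · rw [sub_nonneg, div_le_one hb0]; exact hs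
        · linarith [add_one_le_exp (-(s / b))]
    _ = exp (-(s / b) * (b - 2 : ℕ)) := by rw [← exp_nat_mul, mul_comm]
    _ ≤ exp (-(1 / 2) * s) := by
        have h1 : s / b * b = s := div_mul_cancel₀ _ hb0.ne'
        have h2 : s / b ≤ s / 4 := div_le_div_of_nonneg_left hs0 (by norm_num) hb4
        rw [Nat.cast_sub (by omega), exp_le_exp]
        push_cast
        linarith

def IsRegularlyVaryingAtZero (F : ℝ → ℝ) (ρ : ℝ) : Prop :=
  ∀ s, 0 < s → Tendsto (fun ε => F (s * ε) / F ε) (𝓝[>] 0) (𝓝 (s ^ ρ))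

section TailBounds

variable {F : ℝ → ℝ} {γ p ε₀ : ℝ}

lemma isRegularlyVaryingAtZero_of_eq_rpow_mul {L : ℝ → ℝ} (hL_pos : ∀ ε ∈ Ioc 0 1, 0 < L ε)
    (hL : ∀ c, 0 < c → Tendsto (fun ε => L (c * ε) / L ε) (𝓝[>] 0) (𝓝 1))
    (hF : ∀ ε ∈ Ioc 0 1, F ε = ε ^ (-γ) * L ε) : IsRegularlyVaryingAtZero F (-γ) := by
  intro s hs
  have h := (hL s hs).const_mul (s ^ (-γ))
  rw [mul_one] at h
  refine h.congr' ?_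
  filter_upwards [Ioc_mem_nhdsGT (lt_min one_pos (inv_pos.2 hs))] with ε hε
  have hε1 : ε ∈ Ioc 0 1 := ⟨hε.1, hε.2.trans (min_le_left _ _)⟩
  have hsε : s * ε ∈ Ioc 0 1 :=
    ⟨mul_pos hs hε.1, (mul_le_mul_of_nonneg_left (hε.2.trans (min_le_right _ _)) hs.le).trans_eq
      (mul_inv_cancel₀ hs.ne')⟩
  have := rpow_pos_of_pos hε.1 (-γ)
  have := hL_pos ε hε1
  rw [hF _ hsε, hF _ hε1, mul_rpow hs.le hε.1.le]
  field_simp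

lemma potter_bound (hF : AntitoneOn F (Ioc 0 1)) (hF_nonneg : ∀ x ∈ Ioc 0 1, 0 ≤ F x)
    (hp : 0 ≤ p) (hε₀ : ε₀ ≤ 1) (hhalf : ∀ x ∈ Ioc 0 ε₀, F (x / 2) ≤ 2 ^ p * F x)
    {x s : ℝ} (hx : x ∈ Ioc 0 ε₀) (hs : s ∈ Ioc 0 1) :
    F (s * x) ≤ 2 ^ p * s ^ (-p) * F x := by
  have hiter : ∀ k : ℕ, x / 2 ^ k ∈ Ioc 0 ε₀ ∧ F (x / 2 ^ k) ≤ (2 ^ p) ^ k * F x := by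
    intro k
    induction k with
    | zero => simpa using hx
    | succ k ih =>
      have hmem : x / 2 ^ (k + 1) ∈ Ioc 0 ε₀ :=
        ⟨by have := hx.1; positivity,
          (div_le_self hx.1.le (one_le_pow₀ one_le_two)).trans hx.2⟩
      refine ⟨hmem, ?_⟩
      calc F (x / 2 ^ (k + 1)) = F (x / 2 ^ k / 2) := by rw [pow_succ, div_div]
        _ ≤ 2 ^ p * F (x / 2 ^ k) := hhalf _ ih.1
        _ ≤ 2 ^ p * ((2 ^ p) ^ k * F x) := by gcongr; exact ih.2
        _ = (2 ^ p) ^ (k + 1) * F x := by ring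
  obtain ⟨n, hn, hsn⟩ := exists_nat_pow_near_of_lt_one hs.1 hs.2 one_half_pos one_half_lt_one
  have hx1 : x ∈ Ioc 0 1 := ⟨hx.1, hx.2.trans hε₀⟩
  have hpow : (2 ^ p : ℝ) ^ n ≤ s ^ (-p) := by
    calc (2 ^ p : ℝ) ^ n = ((1 / 2 : ℝ) ^ n) ^ (-p) := by
          rw [one_div, inv_pow, inv_rpow (by positivity), rpow_neg (by positivity), inv_inv,
            ← rpow_natCast, ← rpow_natCast, ← rpow_mul zero_le_two, ← rpow_mul zero_le_two,
            mul_comm]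
      _ ≤ s ^ (-p) := rpow_le_rpow_of_nonpos hs.1 hsn (neg_nonpos.2 hp)
  calc F (s * x) ≤ F (x / 2 ^ (n + 1)) := by
        refine hF (Ioc_subset_Ioc_right hε₀ (hiter (n + 1)).1) ⟨mul_pos hs.1 hx.1, ?_⟩ ?_
        · exact (mul_le_of_le_one_left hx.1.le hs.2).trans hx1.2
        · rw [div_eq_mul_inv, mul_comm, ← inv_pow, ← one_div]
          exact mul_le_mul_of_nonneg_right hn.le hx.1.le
    _ ≤ (2 ^ p) ^ (n + 1) * F x := (hiter (n + 1)).2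
    _ ≤ 2 ^ p * s ^ (-p) * F x := by
        rw [pow_succ, mul_comm _ (2 ^ p)]
        gcongr
        exact hF_nonneg x hx1

lemma tail_ratio_le (hF : AntitoneOn F (Ioc 0 1)) (hF_pos : ∀ x ∈ Ioc 0 1, 0 < F x)
    (hp : 0 ≤ p) (hε₀ : ε₀ ≤ 1) (hhalf : ∀ x ∈ Ioc 0 ε₀, F (x / 2) ≤ 2 ^ p * F x)
    {ε s : ℝ} (hε : ε ∈ Ioc 0 ε₀) (hs : 0 < s) (hsε : s * ε ≤ 1) :
    F (s * ε) / F ε ≤ 2 ^ p * (s ^ (-p) + 1) := by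
  have hε1 : ε ∈ Ioc 0 1 := ⟨hε.1, hε.2.trans hε₀⟩
  rw [div_le_iff₀ (hF_pos ε hε1)]
  rcases le_or_gt s 1 with hs1 | hs1
  · calc F (s * ε) ≤ 2 ^ p * s ^ (-p) * F ε :=
          potter_bound hF (fun x hx => (hF_pos x hx).le) hp hε₀ hhalf hε ⟨hs, hs1⟩
      _ ≤ 2 ^ p * (s ^ (-p) + 1) * F ε := by
          gcongr
          · exact (hF_pos ε hε1).le
          · linarith
  · calc F (s * ε) ≤ F ε :=
          hF hε1 ⟨mul_pos hs hε.1, hsε⟩ (le_mul_of_one_le_left hε.1.le hs1.le)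
      _ ≤ 2 ^ p * (s ^ (-p) + 1) * F ε := by
          refine le_mul_of_one_le_left (hF_pos ε hε1).le ?_
          have := one_le_rpow one_le_two hp
          have := rpow_nonneg hs.le (-p)
          nlinarith

lemma exists_half_le_two_rpow_mul (hF_pos : ∀ x ∈ Ioc 0 1, 0 < F x)
    (hF_reg : IsRegularlyVaryingAtZero F (-γ)) (hγp : γ < p) :
    ∃ ε₀ ∈ Ioc (0 : ℝ) 1, ∀ x ∈ Ioc 0 ε₀, F (x / 2) ≤ 2 ^ p * F x := by
  have hlim : (1 / 2 : ℝ) ^ (-γ) < 2 ^ p := by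
    rw [one_div, inv_rpow zero_le_two, rpow_neg zero_le_two, inv_inv]
    exact rpow_lt_rpow_of_exponent_lt one_lt_two hγp
  have hev : ∀ᶠ x in 𝓝[>] (0 : ℝ), F (x / 2) ≤ 2 ^ p * F x := by
    filter_upwards [(hF_reg _ one_half_pos).eventually_lt_const hlim,
      Ioc_mem_nhdsGT zero_lt_one] with x hx hx1
    rw [one_div_mul_eq_div, div_lt_iff₀ (hF_pos x hx1)] at hx
    exact hx.le
  obtain ⟨u, hu, hsub⟩ := mem_nhdsGT_iff_exists_Ioc_subset.1 hev
  exact ⟨min u 1, ⟨lt_min hu one_pos, min_le_right u 1⟩,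
    fun x hx => hsub ⟨hx.1, hx.2.trans (min_le_left u 1)⟩⟩

lemma norm_rescaledIntegrand_le (hF : AntitoneOn F (Ioc 0 1))
    (hF_pos : ∀ x ∈ Ioc 0 1, 0 < F x) (hp : 0 ≤ p) (hε₀ : ε₀ ≤ 1)
    (hhalf : ∀ x ∈ Ioc 0 ε₀, F (x / 2) ≤ 2 ^ p * F x) {b : ℕ} (hb : 4 ≤ b) (hbε : 1 / b ≤ ε₀)
    {s : ℝ} (hs : 0 < s) :
    ‖rescaledIntegrand F b s‖ ≤ 2 ^ p * (s ^ (1 - p) + s) * exp (-(1 / 2) * s) := by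
  have hb0 : (0 : ℝ) < b := by positivity
  by_cases hsb : s ∈ Ioc 0 (b : ℝ)
  swap
  · rw [rescaledIntegrand, indicator_of_notMem hsb, norm_zero]
    positivity
  have h1b : 1 / (b : ℝ) ∈ Ioc 0 1 := ⟨by positivity, hbε.trans hε₀⟩
  have hsb1 : s / b ≤ 1 := (div_le_one hb0).2 hsb.2
  have hfac : 0 ≤ 1 - 1 / (b : ℝ) ∧ 1 - 1 / (b : ℝ) ≤ 1 :=
    ⟨sub_nonneg.2 h1b.2, sub_le_self _ h1b.1.le⟩
  have hexp := one_sub_div_pow_sub_two_le_exp hb hs.le hsb.2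
  have hpow_nonneg : 0 ≤ (1 - s / b) ^ (b - 2) := pow_nonneg (sub_nonneg.2 hsb1) _
  have hratio : F (s / b) / F (1 / b) ≤ 2 ^ p * (s ^ (-p) + 1) := by
    have h := tail_ratio_le hF hF_pos hp hε₀ hhalf ⟨h1b.1, hbε⟩ hs (by rwa [mul_one_div])
    rwa [mul_one_div] at h
  have hratio_nonneg : 0 ≤ F (s / b) / F (1 / b) :=
    div_nonneg (hF_pos _ ⟨by positivity, hsb1⟩).le (hF_pos _ h1b).le
  rw [rescaledIntegrand, indicator_of_mem hsb,
    norm_of_nonneg (mul_nonneg (mul_nonneg (mul_nonneg hfac.1 hs.le) hpow_nonneg) hratio_nonneg)]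
  calc (1 - 1 / b) * s * (1 - s / b) ^ (b - 2) * (F (s / b) / F (1 / b))
      ≤ 1 * s * exp (-(1 / 2) * s) * (2 ^ p * (s ^ (-p) + 1)) := by
        gcongr
        exact hfac.2
    _ = 2 ^ p * (s ^ (1 - p) + s) * exp (-(1 / 2) * s) := by
        rw [sub_eq_add_neg, rpow_add hs, rpow_one]
        ring

lemma integrableOn_rpow_add_mul_exp_neg_half (hp : p < 2) :
    IntegrableOn (fun s => 2 ^ p * (s ^ (1 - p) + s) * exp (-(1 / 2) * s)) (Ioi 0) := by
  have h1 := integrableOn_rpow_mul_exp_neg_mul_rpow (s := 1 - p) (by linarith) one_pos one_half_pos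
  have h2 := integrableOn_rpow_mul_exp_neg_mul_rpow (s := 1) (by norm_num) one_pos one_half_pos
  refine IntegrableOn.congr_fun ((h1.add h2).const_mul (2 ^ p)) (fun s _ => ?_)
    measurableSet_Ioi
  simp only [Pi.add_apply, rpow_one]
  ring

lemma tendsto_rescaledIntegrand (hF_reg : IsRegularlyVaryingAtZero F (-γ)) {s : ℝ}
    (hs : 0 < s) :
    Tendsto (fun b : ℕ => rescaledIntegrand F b s) atTop (𝓝 (exp (-s) * s ^ (2 - γ - 1))) := by
  have hinv : Tendsto (fun b : ℕ => 1 / (b : ℝ)) atTop (𝓝[>] 0) :=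
    (tendsto_inv_atTop_nhdsGT_zero.comp tendsto_natCast_atTop_atTop).congr fun b => by simp
  have hfac : Tendsto (fun b : ℕ => (1 - 1 / (b : ℝ)) * s) atTop (𝓝 s) := by
    simpa using
      ((tendsto_const_nhds (x := (1 : ℝ))).sub (hinv.mono_right nhdsWithin_le_nhds)).mul_const s
  have h := (hfac.mul (tendsto_one_sub_div_pow_sub s 2)).mul ((hF_reg s hs).comp hinv)
  rw [show 2 - γ - 1 = 1 + -γ by ring, rpow_add hs, rpow_one, ← mul_assoc, mul_comm (exp (-s))]
  refine h.congr' ?_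
  filter_upwards [eventually_gt_atTop ⌈s⌉₊] with b hb
  have hsb : s ∈ Ioc 0 (b : ℝ) := ⟨hs, (Nat.le_ceil s).trans (by exact_mod_cast hb.le)⟩
  simp only [rescaledIntegrand, indicator_of_mem hsb, Function.comp, mul_one_div]

theorem tendsto_integral_rescaledIntegrand (hγ0 : 0 ≤ γ) (hγ2 : γ < 2)
    (hF_meas : Measurable F) (hF_anti : AntitoneOn F (Ioc 0 1))
    (hF_pos : ∀ x ∈ Ioc 0 1, 0 < F x) (hF_reg : IsRegularlyVaryingAtZero F (-γ)) :
    Tendsto (fun b : ℕ => ∫ s in Ioi 0, rescaledIntegrand F b s) atTop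
      (𝓝 (Gamma (2 - γ))) := by
  -- any exponent `p ∈ (γ, 2)` makes the Potter bound integrable at `0`
  obtain ⟨p, hγp, hp2⟩ := exists_between hγ2
  obtain ⟨ε₀, hε₀, hhalf⟩ := exists_half_le_two_rpow_mul hF_pos hF_reg hγp
  rw [Gamma_eq_integral (by linarith)]
  refine tendsto_integral_filter_of_dominated_convergence _
    (Eventually.of_forall fun b => ?_) ?_ (integrableOn_rpow_add_mul_exp_neg_half hp2)
    (ae_restrict_of_forall_mem measurableSet_Ioi fun s hs => tendsto_rescaledIntegrand hF_reg hs)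
  · exact (Measurable.indicator (by fun_prop) measurableSet_Ioc).aestronglyMeasurable
  · have hinv : ∀ᶠ b : ℕ in atTop, 1 / (b : ℝ) ≤ ε₀ :=
      (tendsto_one_div_atTop_nhds_zero_nat.eventually (ge_mem_nhds hε₀.1))
    filter_upwards [eventually_ge_atTop 4, hinv] with b hb hbε
    exact ae_restrict_of_forall_mem measurableSet_Ioi fun s hs =>
      norm_rescaledIntegrand_le hF_anti hF_pos (hγ0.trans hγp.le) hε₀.2 hhalf hb hbε hs

end TailBounds

/-- Under Assumption (A), the total coalescence rate
`α_b = ∫ (1 - (1-x)^b - b x (1-x)^{b-1}) ν(dx)` of the `Λ`-coalescent started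
from `b` blocks, which equals `∑_{k=2}^b C(b,k) ∫ x^k (1-x)^{b-k} ν(dx)`,
satisfies `α_b / (b^γ L(1/b)) → Γ(2-γ)` as `b → ∞`. -/
theorem stmt15
    (ν : Measure ℝ) (hνsupp : ν (Set.Ioc 0 1)ᶜ = 0)
    (hνmom : ∫⁻ r, ENNReal.ofReal (r ^ 2) ∂ν < ⊤)
    (γ : ℝ) (hγ : γ ∈ Set.Ioo (1 : ℝ) 2)
    (L : ℝ → ℝ) (hLpos : ∀ ε ∈ Set.Ioc (0 : ℝ) 1, 0 < L ε)
    (hLslow : ∀ c : ℝ, 0 < c →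
      Tendsto (fun ε => L (c * ε) / L ε) (nhdsWithin 0 (Set.Ioi 0)) (nhds 1))
    (hA : ∀ ε ∈ Set.Ioc (0 : ℝ) 1,
      ν (Set.Icc ε 1) = ENNReal.ofReal (ε ^ (-γ) * L ε)) :
    (∀ b : ℕ, 2 ≤ b →
      ∫ x, (1 - (1 - x) ^ b - (b : ℝ) * x * (1 - x) ^ (b - 1)) ∂ν
        = ∑ k ∈ Finset.Icc 2 b,
            (b.choose k : ℝ) * ∫ x, x ^ k * (1 - x) ^ (b - k) ∂ν) ∧
    Tendsto
      (fun b : ℕ =>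
        (∫ x, (1 - (1 - x) ^ b - (b : ℝ) * x * (1 - x) ^ (b - 1)) ∂ν) /
          ((b : ℝ) ^ γ * L (1 / (b : ℝ))))
      atTop (nhds (Real.Gamma (2 - γ))) := by
  set F : ℝ → ℝ := fun t => (ν (Icc t 1)).toReal
  have hfin : ∀ t ∈ Ioc 0 1, ν (Icc t 1) ≠ ⊤ := fun t ht => by
    rw [hA t ht]; exact ENNReal.ofReal_ne_top
  have hF : ∀ t ∈ Ioc 0 1, F t = t ^ (-γ) * L t := fun t ht =>
    (congrArg ENNReal.toReal (hA t ht)).trans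
      (ENNReal.toReal_ofReal (mul_pos (rpow_pos_of_pos ht.1 _) (hLpos t ht)).le)
  have hF_pos : ∀ t ∈ Ioc 0 1, 0 < F t := fun t ht =>
    (hF t ht).symm ▸ mul_pos (rpow_pos_of_pos ht.1 _) (hLpos t ht)
  have hF_anti : AntitoneOn F (Ioc 0 1) := fun s hs _ _ hst =>
    ENNReal.toReal_mono (hfin s hs) (measure_mono (Icc_subset_Icc_left hst))
  refine ⟨fun b _ => integral_probAtLeastTwo_eq_sum hνsupp hνmom b, ?_⟩
  refine (tendsto_integral_rescaledIntegrand (zero_le_one.trans hγ.1.le) hγ.2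
    (measurable_toReal_measure_Icc ν 1) hF_anti hF_pos
    (isRegularlyVaryingAtZero_of_eq_rpow_mul hLpos hLslow hF)).congr' ?_
  filter_upwards [eventually_ge_atTop 2] with b hb
  have hb0 : (0 : ℝ) < b := by positivity
  have hb1 : 1 / (b : ℝ) ∈ Ioc 0 1 :=
    ⟨by positivity, (div_le_one hb0).2 (by exact_mod_cast (by omega : 1 ≤ b))⟩
  rw [integral_rescaledIntegrand F (by omega), hF _ hb1]
  congr 1
  · exact (integral_probAtLeastTwo_eq_integral_tail hνsupp hfin b).symm
  · rw [one_div, inv_rpow hb0.le, rpow_neg hb0.le, inv_inv]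
end

section
/- For every γ ∈ (1,2), ∑_{k=2}^{∞} (k−1) γ Γ(k−γ) / k! = Γ(2−γ)/(γ−1), where Γ is the Gamma function and the series converges. -/
/-!
With `E n = Γ(n + 2 - γ) / n!` and `F n = E n + E (n + 1) / (γ - 1)` (`gammaDivFactorial` and
`seriesTail` below), the functional equation
`Γ(x + 1) = x Γ(x)` shows that the `k`-th term of the series is `F k - F (k + 1)`, and
`F 0 = Γ(2 - γ) / (γ - 1)`. The series therefore telescopes, provided `F n → 0`, i.e. `E n → 0`.
This follows from log-convexity of `Γ`, which gives `Γ(x + s) ≤ x ^ s Γ(x)` for `s ∈ (0, 1)`,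
hence `E n ≤ n ^ (1 - γ)`.
-/

open Filter Topology Real

namespace Real

theorem Gamma_add_le_rpow_mul_Gamma {x s : ℝ} (hx : 0 < x) (hs0 : 0 < s) (hs1 : s < 1) :
    Gamma (x + s) ≤ x ^ s * Gamma x := by
  have hΓ := Gamma_pos_of_pos hx
  have hconv := Gamma_mul_add_mul_le_rpow_Gamma_mul_rpow_Gamma (a := 1 - s) (b := s)
    hx (by linarith : 0 < x + 1) (by linarith) hs0 (by ring)
  rw [show (1 - s) * x + s * (x + 1) = x + s by ring, Gamma_add_one hx.ne',
    mul_rpow hx.le hΓ.le] at hconv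
  calc Gamma (x + s) ≤ Gamma x ^ (1 - s) * (x ^ s * Gamma x ^ s) := hconv
    _ = x ^ s * Gamma x := by
      rw [mul_left_comm, ← rpow_add hΓ, sub_add_cancel, rpow_one]

theorem tendsto_Gamma_add_div_Gamma_add_one {s : ℝ} (hs0 : 0 < s) (hs1 : s < 1) :
    Tendsto (fun x => Gamma (x + s) / Gamma (x + 1)) atTop (𝓝 0) := by
  have hpow : Tendsto (fun x : ℝ => x ^ (s - 1)) atTop (𝓝 0) := by
    simpa only [neg_sub] using tendsto_rpow_neg_atTop (by linarith : 0 < 1 - s)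
  refine tendsto_of_tendsto_of_tendsto_of_le_of_le' tendsto_const_nhds hpow ?_ ?_
  · filter_upwards [eventually_gt_atTop 0] with x hx
    exact div_nonneg (Gamma_pos_of_pos (by linarith)).le (Gamma_pos_of_pos (by linarith)).le
  · filter_upwards [eventually_gt_atTop 0] with x hx
    have hΓ := Gamma_pos_of_pos hx
    calc Gamma (x + s) / Gamma (x + 1) ≤ x ^ s * Gamma x / (x * Gamma x) := by
          rw [Gamma_add_one hx.ne']
          gcongr
          exact Gamma_add_le_rpow_mul_Gamma hx hs0 hs1
      _ = x ^ (s - 1) := by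
          rw [rpow_sub_one hx.ne']
          field_simp

end Real

theorem hasSum_sub_succ_of_antitone {f : ℕ → ℝ} {l : ℝ} (hf : Antitone f)
    (hl : Tendsto f atTop (𝓝 l)) : HasSum (fun n => f n - f (n + 1)) (f 0 - l) := by
  rw [hasSum_iff_tendsto_nat_of_nonneg (fun n => sub_nonneg.2 (hf n.le_succ))]
  simpa only [Finset.sum_range_sub'] using tendsto_const_nhds.sub hl

open Nat in
noncomputable def gammaDivFactorial (s : ℝ) (n : ℕ) : ℝ := Gamma (n + s) / n !

theorem tendsto_gammaDivFactorial {s : ℝ} (hs0 : 0 < s) (hs1 : s < 1) :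
    Tendsto (gammaDivFactorial s) atTop (𝓝 0) :=
  ((tendsto_Gamma_add_div_Gamma_add_one hs0 hs1).comp tendsto_natCast_atTop_atTop).congr
    fun n => by simp only [Function.comp_apply, Gamma_nat_eq_factorial, gammaDivFactorial]

theorem gammaDivFactorial_succ {s : ℝ} (hs : 0 < s) (n : ℕ) :
    gammaDivFactorial s (n + 1) = (n + s) / (n + 1) * gammaDivFactorial s n := by
  have hns : (n : ℝ) + s ≠ 0 := by positivity
  simp only [gammaDivFactorial, Nat.cast_succ, Nat.factorial_succ, Nat.cast_mul,
    add_right_comm _ (1 : ℝ), Gamma_add_one hns]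
  field_simp

section seriesTail

variable {γ : ℝ}

noncomputable def seriesTail (γ : ℝ) (n : ℕ) : ℝ :=
  gammaDivFactorial (2 - γ) n + gammaDivFactorial (2 - γ) (n + 1) / (γ - 1)

theorem seriesTail_zero (h1 : γ ≠ 1) (h2 : γ < 2) :
    seriesTail γ 0 = Gamma (2 - γ) / (γ - 1) := by
  have hγ1 : γ - 1 ≠ 0 := sub_ne_zero.2 h1
  rw [seriesTail, gammaDivFactorial_succ (by linarith)]
  simp only [gammaDivFactorial, Nat.cast_zero, zero_add, Nat.factorial_zero, Nat.cast_one]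
  field_simp
  ring

theorem term_eq_seriesTail_sub (h1 : γ ≠ 1) (h2 : γ < 2) (k : ℕ) :
    ((k : ℝ) + 2 - 1) * γ * Gamma ((k : ℝ) + 2 - γ) / ((k + 2).factorial : ℝ) =
      seriesTail γ k - seriesTail γ (k + 1) := by
  have hs : 0 < 2 - γ := by linarith
  have hγ1 : γ - 1 ≠ 0 := sub_ne_zero.2 h1
  have hterm : ((k : ℝ) + 2 - 1) * γ * Gamma ((k : ℝ) + 2 - γ) / ((k + 2).factorial : ℝ) =
      γ / (k + 2) * gammaDivFactorial (2 - γ) k := by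
    rw [gammaDivFactorial, ← add_sub_assoc, Nat.factorial_succ, Nat.factorial_succ]
    push_cast
    field_simp
    ring
  rw [hterm, seriesTail, seriesTail, gammaDivFactorial_succ hs (k + 1),
    gammaDivFactorial_succ hs k]
  push_cast
  field_simp
  ring

theorem seriesTail_antitone (h0 : 0 ≤ γ) (h1 : γ ≠ 1) (h2 : γ < 2) :
    Antitone (seriesTail γ) := by
  refine antitone_nat_of_succ_le fun k => sub_nonneg.1 ?_
  rw [← term_eq_seriesTail_sub h1 h2]
  have hk : (0 : ℝ) ≤ k := k.cast_nonneg
  have hΓ : 0 ≤ Gamma ((k : ℝ) + 2 - γ) := Gamma_nonneg_of_nonneg (by linarith)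
  exact div_nonneg (mul_nonneg (mul_nonneg (by linarith) h0) hΓ) (Nat.cast_nonneg _)

theorem tendsto_seriesTail (h1 : 1 < γ) (h2 : γ < 2) :
    Tendsto (seriesTail γ) atTop (𝓝 0) := by
  have hE := tendsto_gammaDivFactorial (s := 2 - γ) (by linarith) (by linarith)
  have hsum := hE.add ((hE.comp (tendsto_add_atTop_nat 1)).div_const (γ - 1))
  rwa [zero_div, add_zero] at hsum

end seriesTail

/-- For every `γ ∈ (1,2)`,
`∑_{k=2}^∞ (k-1) γ Γ(k-γ)/k! = Γ(2-γ)/(γ-1)`, the series being convergent. -/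
theorem stmt18 (γ : ℝ) (hγ : γ ∈ Set.Ioo (1 : ℝ) 2) :
    (Summable fun k : ℕ =>
      ((k : ℝ) + 2 - 1) * γ * Real.Gamma ((k : ℝ) + 2 - γ) /
        ((k + 2).factorial : ℝ)) ∧
    ∑' k : ℕ, ((k : ℝ) + 2 - 1) * γ * Real.Gamma ((k : ℝ) + 2 - γ) /
        ((k + 2).factorial : ℝ)
      = Real.Gamma (2 - γ) / (γ - 1) := by
  obtain ⟨h1, h2⟩ := hγ
  have hsum := hasSum_sub_succ_of_antitone (seriesTail_antitone (by linarith) h1.ne' h2)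
    (tendsto_seriesTail h1 h2)
  rw [seriesTail_zero h1.ne' h2, sub_zero, ← funext (term_eq_seriesTail_sub h1.ne' h2)] at hsum
  exact ⟨hsum.summable, hsum.tsum_eq⟩
end
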